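/- Let X be a random walk on Z with i.i.d. ±1 steps, negative mean mu < 0, started at 0. For a face-height defined as H = -4 W where W is the winding number of the loop-erasure of a two-dimensional walk whose vertical coordinate is X, the event {W >= m} forces the existence of a time l >= m^2/4 with X_l >= 0; consequently P(W >= m) <= sum over l >= m^2/4 of exp(-l mu^2 / 8) <= 2 exp(-d m^2) for d = mu^2/32 (for all m large enough). -/

import Mathlib

/-!
STATEMENT 13: Let `X` be a random walk on `ℤ` with i.i.d. `±1` steps of negative mean
`μ < 0`, started at `0`, and let `W` be the winding number about the origin of the
loop-erasure `L` of a two-dimensional walk `Y` whose vertical coordinate is `X` (the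
loop-erasure is a self-avoiding subsequence of `Y`).  Then `{W ≥ m}` forces the
existence of a time `l ≥ m²/4` with `X_l ≥ 0`, and consequently
`P(W ≥ m) ≤ ∑_{l ≥ m²/4} exp(-l μ²/8) ≤ 2 exp(-d m²)` with `d = μ²/32`, for all `m`
large enough.
-/

/-- The four diagonal unit steps on `ℤ²`. -/
def diagDirs : Set (ℤ × ℤ) := {(1, 1), (1, -1), (-1, 1), (-1, -1)}

/-- The counterclockwise winding number of the lattice path `p` about the base point `b`:
the number of right-to-left crossings of the upward vertical ray from `b` minus the
number of left-to-right crossings. -/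
noncomputable def windPath (p : ℕ → ℤ × ℤ) (b : ℤ × ℤ) : ℤ :=
  ({i : ℕ | (p (i + 1)).1 = b.1 ∧ b.2 < (p (i + 1)).2 ∧
      b.1 < (p i).1 ∧ (p (i + 2)).1 < b.1}.ncard : ℤ)
  - ({i : ℕ | (p (i + 1)).1 = b.1 ∧ b.2 < (p (i + 1)).2 ∧
      (p i).1 < b.1 ∧ b.1 < (p (i + 2)).1}.ncard : ℤ)

/-!
Let the self-avoiding path `L` cross the ray `{0} × (0, ∞)` counterclockwise at times
`a₁ < ⋯ < a_K` and clockwise at `B` times, so that `K - B = W ≥ m`. Between two consecutive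
counterclockwise crossings the path has to get back from `x < 0` to `x > 0` through `x = 0`.
If it does so above the origin, that is a clockwise crossing; otherwise it first descends from
the height `hⱼ` of the earlier crossing to height `≤ 0`, which takes at least `hⱼ` steps. The
`hⱼ` are distinct positive integers because `L` is self-avoiding, so at least `m - 1` of them
add up to at least `m(m-1)/2`, and the last crossing, at positive height, comes after time
`m²/4`. On the walk this is a time `l ≥ m²/4` with `X_l > 0`. Hoeffding's inequality bounds
`P(X_l ≥ 0)` by `exp(-l μ²/2)`, and a union bound over `l` and a geometric series give the tails.
-/

open Finset Function

theorem card_mul_card_add_one_le_two_mul_sum {H : Finset ℤ} (hpos : ∀ x ∈ H, 0 < x) :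
    (#H : ℤ) * (#H + 1) ≤ 2 * ∑ x ∈ H, x := by
  induction H using Finset.induction_on_max with
  | empty => simp
  | insert a s hlt ih =>
    have ha : a ∉ s := fun h => (hlt a h).false
    have hcard : (#s : ℤ) ≤ a - 1 := by
      have hsub : s ⊆ Icc 1 (a - 1) := fun x hx =>
        mem_Icc.mpr ⟨hpos x (mem_insert_of_mem hx), by linarith [hlt x hx]⟩
      have hs := card_le_card hsub
      rw [Int.card_Icc] at hs
      have := hpos a (mem_insert_self a s)
      omega
    have ih := ih fun x hx => hpos x (mem_insert_of_mem hx)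
    rw [card_insert_of_notMem ha, sum_insert ha]
    push_cast
    nlinarith

section UnitSteps

variable {f : ℕ → ℤ}

theorem sub_add_le_of_unit_steps (hf : ∀ n, f (n + 1) = f n + 1 ∨ f (n + 1) = f n - 1)
    (u k : ℕ) : f u - f (u + k) ≤ k := by
  induction k with
  | zero => simp
  | succ k ih =>
    rcases hf (u + k) with h | h <;> rw [← add_assoc, h] <;> push_cast <;> linarith

theorem exists_upcrossing (hf : ∀ n, f (n + 1) = f n + 1 ∨ f (n + 1) = f n - 1)
    {a b : ℕ} (ha : f a = -1) (hb : f b = 1) (hab : a ≤ b) :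
    ∃ c, a ≤ c ∧ c + 2 ≤ b ∧ f c = -1 ∧ f (c + 1) = 0 ∧ f (c + 2) = 1 := by
  classical
  have hex : ∃ k, 1 ≤ f (a + k) := ⟨b - a, by rw [Nat.add_sub_cancel' hab, hb]⟩
  have hk : 1 ≤ f (a + Nat.find hex) := Nat.find_spec hex
  have hbefore : ∀ e < Nat.find hex, f (a + e) ≤ 0 := fun e he => by
    have := Nat.find_min hex he; omega
  have hkb : Nat.find hex ≤ b - a := Nat.find_min' hex (by rw [Nat.add_sub_cancel' hab, hb])
  have hk0 : Nat.find hex ≠ 0 := fun h => by rw [h, add_zero, ha] at hk; omega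
  have hk1 : Nat.find hex ≠ 1 := fun h => by rw [h] at hk; rcases hf a with h' | h' <;> omega
  obtain ⟨c, hc⟩ : ∃ c, a + Nat.find hex = c + 2 := ⟨a + Nat.find hex - 2, by omega⟩
  have h0 : f c ≤ 0 := by
    simpa [show a + (Nat.find hex - 2) = c by omega] using hbefore (Nat.find hex - 2) (by omega)
  have h1 : f (c + 1) ≤ 0 := by
    simpa [show a + (Nat.find hex - 1) = c + 1 by omega] using hbefore (Nat.find hex - 1) (by omega)
  rw [hc] at hk
  refine ⟨c, by omega, by omega, ?_⟩
  have s1 : f (c + 2) = f (c + 1) + 1 ∨ f (c + 2) = f (c + 1) - 1 := hf (c + 1)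
  rcases hf c with s0 | s0 <;> omega

end UnitSteps

/-- Scanning `A` upwards, each element below `a` is either followed by an element of `B` before
the next element of `A`, or has its `h`-value fit into the gap up to it; `G` collects the latter. -/
theorem exists_subset_card_le_and_sum_le {A B : Finset ℕ} {h : ℕ → ℤ}
    (hgap : ∀ i ∈ A, ∀ j ∈ A, i < j → (∃ c ∈ B, i < c ∧ c < j) ∨ h i ≤ j - i)
    {s : Finset ℕ} (hs : s ⊆ A) {a : ℕ} (ha : a ∈ A) (hsa : ∀ x ∈ s, x < a) :
    ∃ G ⊆ s, #s ≤ #G + #{c ∈ B | c < a} ∧ ∑ i ∈ G, h i ≤ a := by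
  induction s using Finset.induction_on_max generalizing a with
  | empty => exact ⟨∅, subset_refl _, by simp, by simp⟩
  | insert i s hlt ih =>
    have hi : i ∉ s := fun h => (hlt i h).false
    have hiA : i ∈ A := hs (mem_insert_self i s)
    have hia : i < a := hsa i (mem_insert_self i s)
    obtain ⟨G, hGs, hcard, hsum⟩ := ih ((subset_insert i s).trans hs) hiA hlt
    have hBia : {c ∈ B | c < i} ⊆ {c ∈ B | c < a} := fun c hc => by
      simp only [mem_filter] at hc ⊢
      exact ⟨hc.1, hc.2.trans hia⟩
    rw [card_insert_of_notMem hi]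
    rcases hgap i hiA a ha hia with ⟨c, hcB, hic, hca⟩ | hgood
    · have hlt' : #{c ∈ B | c < i} < #{c ∈ B | c < a} :=
        card_lt_card <| (ssubset_iff_of_subset hBia).mpr
          ⟨c, mem_filter.mpr ⟨hcB, hca⟩, fun h => (mem_filter.mp h).2.not_gt hic⟩
      exact ⟨G, hGs.trans (subset_insert i s), by omega, hsum.trans (by exact_mod_cast hia.le)⟩
    · have hiG : i ∉ G := fun h => hi (hGs h)
      have := card_le_card hBia
      refine ⟨insert i G, insert_subset_insert i hGs, ?_, ?_⟩
      · rw [card_insert_of_notMem hiG]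
        omega
      · rw [sum_insert hiG]
        linarith

theorem exists_mem_mul_pred_le_two_mul {A B : Finset ℕ} {h : ℕ → ℤ}
    (hpos : ∀ i ∈ A, 0 < h i) (hinj : Set.InjOn h A)
    (hgap : ∀ i ∈ A, ∀ j ∈ A, i < j → (∃ c ∈ B, i < c ∧ c < j) ∨ h i ≤ j - i)
    {m : ℕ} (hm : 1 ≤ m) (hcard : m + #B ≤ #A) :
    ∃ i ∈ A, (m : ℤ) * (m - 1) ≤ 2 * i := by
  have hA : A.Nonempty := card_pos.mp (by omega)
  have ha := A.max'_mem hA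
  obtain ⟨G, hGs, hGcard, hGsum⟩ := exists_subset_card_le_and_sum_le hgap (erase_subset _ A) ha
    fun x hx => lt_of_le_of_ne (A.le_max' x (mem_of_mem_erase hx)) (ne_of_mem_erase hx)
  have hGA : G ⊆ A := hGs.trans (erase_subset _ A)
  have hdistinct := card_mul_card_add_one_le_two_mul_sum (H := G.image h) <| by
    simpa using fun i hi => hpos i (hGA hi)
  rw [card_image_of_injOn (hinj.mono hGA), sum_image (hinj.mono hGA)] at hdistinct
  have := card_erase_of_mem ha
  have := card_filter_le B (· < A.max' hA)
  have hG : (m : ℤ) - 1 ≤ #G := by omega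
  exact ⟨A.max' hA, ha, by nlinarith⟩

theorem unit_steps_of_sub_mem_diagDirs {u v : ℤ × ℤ} (h : v - u ∈ diagDirs) :
    (v.1 = u.1 + 1 ∨ v.1 = u.1 - 1) ∧ (v.2 = u.2 + 1 ∨ v.2 = u.2 - 1) := by
  simp only [diagDirs, Set.mem_insert_iff, Set.mem_singleton_iff, Prod.ext_iff, Prod.fst_sub,
    Prod.snd_sub] at h
  omega

def ccwCrossings (p : ℕ → ℤ × ℤ) : Set ℕ :=
  {i | (p (i + 1)).1 = 0 ∧ 0 < (p (i + 1)).2 ∧ 0 < (p i).1 ∧ (p (i + 2)).1 < 0}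

def cwCrossings (p : ℕ → ℤ × ℤ) : Set ℕ :=
  {i | (p (i + 1)).1 = 0 ∧ 0 < (p (i + 1)).2 ∧ (p i).1 < 0 ∧ 0 < (p (i + 2)).1}

theorem windPath_origin (p : ℕ → ℤ × ℤ) :
    windPath p (0, 0) = (ccwCrossings p).ncard - (cwCrossings p).ncard :=
  rfl

section LatticePath

variable {P : ℕ → ℤ × ℤ}

theorem fst_eq_of_mem_ccwCrossings (hP : ∀ n, P (n + 1) - P n ∈ diagDirs) {i : ℕ}
    (hi : i ∈ ccwCrossings P) : (P i).1 = 1 ∧ (P (i + 2)).1 = -1 := by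
  obtain ⟨h1, -, h0, h2⟩ := hi
  have s0 := (unit_steps_of_sub_mem_diagDirs (hP i)).1
  have s1 : (P (i + 2)).1 = (P (i + 1)).1 + 1 ∨ (P (i + 2)).1 = (P (i + 1)).1 - 1 :=
    (unit_steps_of_sub_mem_diagDirs (hP (i + 1))).1
  omega

theorem ccwCrossings_gap (hP : ∀ n, P (n + 1) - P n ∈ diagDirs) {i j : ℕ}
    (hi : i ∈ ccwCrossings P) (hj : j ∈ ccwCrossings P) (hij : i < j) :
    (∃ c ∈ cwCrossings P, i < c ∧ c < j) ∨ (P (i + 1)).2 ≤ j - i := by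
  have hx := fun n => (unit_steps_of_sub_mem_diagDirs (hP n)).1
  have hy := fun n => (unit_steps_of_sub_mem_diagDirs (hP n)).2
  obtain ⟨-, hi2⟩ := fst_eq_of_mem_ccwCrossings hP hi
  obtain ⟨hj0, -⟩ := fst_eq_of_mem_ccwCrossings hP hj
  have hij2 : i + 2 ≤ j := by
    have := hi.1
    rcases (by omega : j = i + 1 ∨ j = i + 2 ∨ i + 2 ≤ j) with rfl | rfl | h <;> omega
  obtain ⟨c, hic, hcj, hc0, hc1, hc2⟩ :=
    exists_upcrossing (f := fun n => (P n).1) hx hi2 hj0 hij2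
  by_cases hc : 0 < (P (c + 1)).2
  · exact Or.inl ⟨c, ⟨hc1, hc, by omega, by omega⟩, by omega, by omega⟩
  · have hdesc := sub_add_le_of_unit_steps (f := fun n => (P n).2) hy (i + 1) (c - i)
    rw [show i + 1 + (c - i) = c + 1 by omega] at hdesc
    right
    omega

theorem exists_late_height_pos_of_le_windPath (hinj : Injective P)
    (hP : ∀ n, P (n + 1) - P n ∈ diagDirs) {m : ℕ} (hm : 1 ≤ m)
    (hW : (m : ℤ) ≤ windPath P (0, 0)) : ∃ i, 0 < (P (i + 1)).2 ∧ m ^ 2 ≤ 4 * (i + 1) := by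
  rw [windPath_origin] at hW
  by_cases hfin : (ccwCrossings P).Finite ∧ (cwCrossings P).Finite
  · obtain ⟨hA, hB⟩ := hfin
    rw [Set.ncard_eq_toFinset_card _ hA, Set.ncard_eq_toFinset_card _ hB] at hW
    have hinjA : Set.InjOn (fun i => (P (i + 1)).2) hA.toFinset := by
      intro i hi j hj hij
      simp only [Set.Finite.coe_toFinset] at hi hj
      exact Nat.succ_injective (hinj (Prod.ext (hi.1.trans hj.1.symm) hij))
    obtain ⟨i, hi, hmi⟩ := exists_mem_mul_pred_le_two_mul (B := hB.toFinset)
      (h := fun i => (P (i + 1)).2) (by simpa using fun i hi => hi.2.1) hinjA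
      (fun i hi j hj hij => by
        simpa using ccwCrossings_gap hP (hA.mem_toFinset.mp hi) (hA.mem_toFinset.mp hj) hij)
      hm (by omega)
    refine ⟨i, (hA.mem_toFinset.mp hi).2.1, ?_⟩
    have : (m : ℤ) ^ 2 ≤ 4 * (i + 1) := by nlinarith
    exact_mod_cast this
  · -- `ncard` is `0` on an infinite set, but such a set of crossings has arbitrarily late ones
    obtain ⟨i, hi, hlt⟩ : ∃ i, 0 < (P (i + 1)).2 ∧ m ^ 2 < i := by
      rcases not_and_or.mp hfin with h | h <;>
        obtain ⟨i, hi, hlt⟩ := Set.Infinite.exists_gt h (m ^ 2) <;> exact ⟨i, hi.2.1, hlt⟩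
    exact ⟨i, hi, by omega⟩

theorem exists_late_height_pos_of_le_windPath_comp {Y : ℕ → ℤ × ℤ} {σ : ℕ → ℕ}
    (hσ : StrictMono σ) (hinj : Injective fun n => Y (σ n))
    (hstep : ∀ n, Y (σ (n + 1)) - Y (σ n) ∈ diagDirs) {m : ℕ} (hm : 1 ≤ m)
    (hW : (m : ℤ) ≤ windPath (fun n => Y (σ n)) (0, 0)) : ∃ l, m ^ 2 ≤ 4 * l ∧ 0 < (Y l).2 := by
  obtain ⟨i, hpos, hi⟩ := exists_late_height_pos_of_le_windPath hinj hstep hm hW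
  exact ⟨σ (i + 1), hi.trans (Nat.mul_le_mul_left 4 hσ.le_apply), hpos⟩

end LatticePath

section Tails

open MeasureTheory ProbabilityTheory Real Filter Topology

theorem measure_le_tsum_ite {α : Type*} [MeasurableSpace α] (ν : Measure α) {S : Set α}
    {p : ℕ → Prop} [DecidablePred p] {E : ℕ → Set α} (h : ∀ x ∈ S, ∃ l, p l ∧ x ∈ E l) :
    ν S ≤ ∑' l, if p l then ν (E l) else 0 :=
  calc ν S ≤ ν (⋃ l, {x | p l ∧ x ∈ E l}) := measure_mono fun x hx => Set.mem_iUnion.mpr (h x hx)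
    _ ≤ ∑' l, ν {x | p l ∧ x ∈ E l} := measure_iUnion_le _
    _ ≤ _ := ENNReal.tsum_le_tsum fun l => by
      split_ifs with hl
      · exact measure_mono fun x hx => hx.2
      · simp [hl]

theorem measure_sum_range_nonneg_le {Ω : Type*} [MeasurableSpace Ω] {ν : Measure Ω}
    [IsProbabilityMeasure ν] {ξ : ℕ → Ω → ℝ} {μ : ℝ} (hμ : μ ≤ 0)
    (hmeas : ∀ i, AEMeasurable (ξ i) ν) (hindep : iIndepFun ξ ν)
    (hbdd : ∀ i, ∀ᵐ ω ∂ν, ξ i ω ∈ Set.Icc (-1 : ℝ) 1) (hmean : ∀ i, ν[ξ i] = μ) (l : ℕ) :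
    ν {ω | 0 ≤ ∑ i ∈ Finset.range l, ξ i ω} ≤ ENNReal.ofReal (exp (-l * (μ ^ 2 / 2))) := by
  have hsubG : ∀ i < l, HasSubgaussianMGF (fun ω => ξ i ω - μ) 1 ν := fun i _ => by
    convert hasSubgaussianMGF_of_mem_Icc (hmeas i) (hbdd i) using 2
    · rw [hmean i]
    · norm_num
  have hcentered : iIndepFun (fun i ω => ξ i ω - μ) ν :=
    hindep.comp (fun _ x => x - μ) fun _ => measurable_sub_const μ
  have hset : {ω | 0 ≤ ∑ i ∈ Finset.range l, ξ i ω}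
      = {ω | -l * μ ≤ ∑ i ∈ Finset.range l, (ξ i ω - μ)} := by
    ext ω
    simp only [Set.mem_ofPred_eq, Finset.sum_sub_distrib, Finset.sum_const, Finset.card_range,
      nsmul_eq_mul]
    constructor <;> intro h <;> linarith
  -- for `l = 0` both sides are `0`, since `x / 0 = 0`
  have hexp : -(-l * μ) ^ 2 / (2 * l * ((1 : NNReal) : ℝ)) = -l * (μ ^ 2 / 2) := by
    rcases eq_or_ne (l : ℝ) 0 with hl | hl
    · simp [hl]
    · field_simp
      simp
  rw [hset, ← ofReal_measureReal, ← hexp]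
  exact ENNReal.ofReal_le_ofReal <| HasSubgaussianMGF.measure_sum_range_ge_le_of_iIndepFun
    hcentered hsubG (by nlinarith [l.cast_nonneg (α := ℝ)])

theorem measure_sum_range_int_nonneg_le {Ω : Type*} [MeasurableSpace Ω] {ν : Measure Ω}
    [IsProbabilityMeasure ν] {ξ : ℕ → Ω → ℤ} {μ : ℝ} (hμ : μ ≤ 0)
    (hmeas : ∀ i, Measurable (ξ i)) (hindep : iIndepFun ξ ν)
    (hsteps : ∀ i ω, ξ i ω = 1 ∨ ξ i ω = -1) (hmean : ∀ i, ∫ ω, (ξ i ω : ℝ) ∂ν = μ) (l : ℕ) :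
    ν {ω | 0 ≤ ∑ i ∈ Finset.range l, ξ i ω} ≤ ENNReal.ofReal (exp (-l * (μ ^ 2 / 2))) := by
  have hset : {ω | 0 ≤ ∑ i ∈ Finset.range l, ξ i ω}
      = {ω | 0 ≤ ∑ i ∈ Finset.range l, (ξ i ω : ℝ)} := by
    ext ω
    exact_mod_cast Iff.rfl
  rw [hset]
  exact measure_sum_range_nonneg_le hμ
    (fun i => ((measurable_of_countable _).comp (hmeas i)).aemeasurable)
    (hindep.comp _ fun _ => measurable_of_countable _)
    (fun i => ae_of_all _ fun ω => by rcases hsteps i ω with h | h <;> simp [h]) hmean l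

theorem tsum_ite_le_exp_div {x r : ℝ} (hr : 0 < r) :
    ∑' l : ℕ, (if x ≤ l then ENNReal.ofReal (exp (-l * r)) else 0)
      ≤ ENNReal.ofReal (exp (-x * r) / (1 - exp (-r))) := by
  have hq : exp (-r) < 1 := exp_lt_one_iff.mpr (by linarith)
  set N := ⌈x⌉₊
  calc ∑' l : ℕ, (if x ≤ l then ENNReal.ofReal (exp (-l * r)) else 0)
      = ∑' k : ℕ, (if x ≤ ↑(k + N) then ENNReal.ofReal (exp (-↑(k + N) * r)) else 0) := by
        rw [← ENNReal.summable.sum_add_tsum_nat_add' (k := N), Finset.sum_eq_zero, zero_add]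
        intro l hl
        rw [if_neg (not_le.mpr (Nat.lt_ceil.mp (Finset.mem_range.mp hl)))]
    _ ≤ ∑' k : ℕ, ENNReal.ofReal (exp (-x * r)) * ENNReal.ofReal (exp (-r)) ^ k :=
        ENNReal.tsum_le_tsum fun k => by
          split_ifs
          · rw [← ENNReal.ofReal_pow (exp_pos _).le, ← ENNReal.ofReal_mul (exp_pos _).le,
              ← exp_nat_mul, ← exp_add]
            refine ENNReal.ofReal_le_ofReal (exp_le_exp.mpr ?_)
            have := Nat.le_ceil x
            push_cast
            nlinarith
          · exact zero_le
    _ = ENNReal.ofReal (exp (-x * r) / (1 - exp (-r))) := by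
        rw [ENNReal.tsum_mul_left, ENNReal.tsum_geometric, ← ENNReal.ofReal_one,
          ← ENNReal.ofReal_sub _ (exp_pos _).le, ← ENNReal.ofReal_inv_of_pos (by linarith),
          ← ENNReal.ofReal_mul (exp_pos _).le, div_eq_mul_inv]

theorem eventually_exp_neg_mul_sq_le {a b C : ℝ} (hba : b < a) (hC : 0 < C) :
    ∀ᶠ m : ℕ in atTop, exp (-a * m ^ 2) ≤ C * exp (-b * m ^ 2) := by
  have hlim : Tendsto (fun m : ℕ => exp (-(a - b) * m ^ 2)) atTop (𝓝 0) :=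
    tendsto_exp_atBot.comp <| Tendsto.const_mul_atTop_of_neg (by linarith) <|
      (tendsto_pow_atTop two_ne_zero).comp tendsto_natCast_atTop_atTop
  filter_upwards [hlim.eventually (gt_mem_nhds hC)] with m hm
  calc exp (-a * m ^ 2) = exp (-(a - b) * m ^ 2) * exp (-b * m ^ 2) := by
        rw [← exp_add]
        ring_nf
    _ ≤ C * exp (-b * m ^ 2) := by gcongr

theorem eventually_tsum_ite_le_two_mul_exp {μ : ℝ} (hμ : μ ≠ 0) :
    ∀ᶠ m : ℕ in atTop, ∑' l : ℕ,
        (if (m : ℝ) ^ 2 / 4 ≤ l then ENNReal.ofReal (exp (-l * (μ ^ 2 / 2))) else 0)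
      ≤ ENNReal.ofReal (2 * exp (-(μ ^ 2 / 32) * m ^ 2)) := by
  have hμ2 : 0 < μ ^ 2 := by positivity
  have hq : exp (-(μ ^ 2 / 2)) < 1 := exp_lt_one_iff.mpr (by linarith)
  filter_upwards [eventually_exp_neg_mul_sq_le (a := μ ^ 2 / 8) (b := μ ^ 2 / 32)
    (C := 2 * (1 - exp (-(μ ^ 2 / 2)))) (by linarith) (by linarith)] with m hm
  refine (tsum_ite_le_exp_div (by linarith)).trans <|
    ENNReal.ofReal_le_ofReal <| (div_le_iff₀ (by linarith)).mpr ?_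
  calc exp (-((m : ℝ) ^ 2 / 4) * (μ ^ 2 / 2)) = exp (-(μ ^ 2 / 8) * m ^ 2) := by ring_nf
    _ ≤ _ := hm
    _ = _ := by ring

end Tails

theorem stmt13_general {Ω : Type*} [MeasurableSpace Ω] (ℙ : MeasureTheory.Measure Ω)
    [MeasureTheory.IsProbabilityMeasure ℙ]
    (μ : ℝ) (hμ : μ < 0)
    (ξ : ℕ → Ω → ℤ) (hmeas : ∀ i, Measurable (ξ i))
    (hindep : ProbabilityTheory.iIndepFun ξ ℙ)
    (hsteps : ∀ i ω, ξ i ω = 1 ∨ ξ i ω = -1)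
    (hmean : ∀ i, ∫ ω, (ξ i ω : ℝ) ∂ℙ = μ)
    (X : ℕ → Ω → ℤ) (hX : ∀ n ω, X n ω = ∑ i ∈ Finset.range n, ξ i ω)
    (Y : ℕ → Ω → ℤ × ℤ)
    (hYvert : ∀ n ω, (Y n ω).2 = X n ω)
    (σ : Ω → ℕ → ℕ) (hσmono : ∀ ω, StrictMono (σ ω))
    (L : ℕ → Ω → ℤ × ℤ) (hL : ∀ n ω, L n ω = Y (σ ω n) ω)
    (hLsimple : ∀ ω, Function.Injective (fun n => L n ω))
    (hLstep : ∀ n ω, L (n + 1) ω - L n ω ∈ diagDirs)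
    (W : Ω → ℤ) (hW : ∀ ω, W ω = windPath (fun n => L n ω) (0, 0)) :
    (∀ ω, ∀ m : ℕ, (m : ℤ) ≤ W ω → ∃ l : ℕ, (m : ℝ) ^ 2 / 4 ≤ (l : ℝ) ∧ 0 ≤ X l ω) ∧
    ∃ m₀ : ℕ, ∀ m : ℕ, m₀ ≤ m →
      ℙ {ω | (m : ℤ) ≤ W ω}
          ≤ ∑' l : ℕ, (if (m : ℝ) ^ 2 / 4 ≤ (l : ℝ) then
              ENNReal.ofReal (Real.exp (-(l : ℝ) * μ ^ 2 / 8)) else 0) ∧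
      ℙ {ω | (m : ℤ) ≤ W ω}
          ≤ ENNReal.ofReal (2 * Real.exp (-(μ ^ 2 / 32) * (m : ℝ) ^ 2)) := by
  have hwind : ∀ ω, ∀ m : ℕ, (m : ℤ) ≤ W ω → ∃ l : ℕ, (m : ℝ) ^ 2 / 4 ≤ (l : ℝ) ∧ 0 ≤ X l ω := by
    intro ω m hm
    rcases Nat.eq_zero_or_pos m with rfl | hm1
    · exact ⟨0, by simp, by simp [hX]⟩
    simp only [hW, hL] at hm hLsimple hLstep
    obtain ⟨l, hl, hpos⟩ := exists_late_height_pos_of_le_windPath_comp (Y := fun n => Y n ω)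
      (hσmono ω) (hLsimple ω) (fun n => hLstep n ω) hm1 hm
    refine ⟨l, ?_, by rw [← hYvert]; exact hpos.le⟩
    rw [div_le_iff₀ four_pos]
    exact_mod_cast hl.trans_eq (mul_comm 4 l)
  have hunion : ∀ m : ℕ, ℙ {ω | (m : ℤ) ≤ W ω} ≤ ∑' l : ℕ,
      (if (m : ℝ) ^ 2 / 4 ≤ l then ENNReal.ofReal (Real.exp (-l * (μ ^ 2 / 2))) else 0) :=
    fun m => (measure_le_tsum_ite ℙ (E := fun l => {ω | 0 ≤ X l ω}) (hwind · m)).trans <|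
      ENNReal.tsum_le_tsum fun l => by
        split_ifs
        · simpa only [hX] using measure_sum_range_int_nonneg_le hμ.le hmeas hindep hsteps hmean l
        · exact le_rfl
  obtain ⟨m₀, hm₀⟩ := Filter.eventually_atTop.mp (eventually_tsum_ite_le_two_mul_exp hμ.ne)
  refine ⟨hwind, m₀, fun m hm =>
    ⟨(hunion m).trans (ENNReal.tsum_le_tsum fun l => ?_), (hunion m).trans (hm₀ m hm)⟩⟩
  split_ifs
  · gcongr
    nlinarith [l.cast_nonneg (α := ℝ)]
  · exact le_rfl

theorem stmt13 {Ω : Type*} [MeasurableSpace Ω] (ℙ : MeasureTheory.Measure Ω)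
    [MeasureTheory.IsProbabilityMeasure ℙ]
    (μ : ℝ) (hμ : μ < 0)
    (ξ : ℕ → Ω → ℤ) (hmeas : ∀ i, Measurable (ξ i))
    (hindep : ProbabilityTheory.iIndepFun ξ ℙ)
    (hsteps : ∀ i ω, ξ i ω = 1 ∨ ξ i ω = -1)
    (hmean : ∀ i, ∫ ω, (ξ i ω : ℝ) ∂ℙ = μ)
    (X : ℕ → Ω → ℤ) (hX : ∀ n ω, X n ω = ∑ i ∈ Finset.range n, ξ i ω)
    (Y : ℕ → Ω → ℤ × ℤ) (hY0 : ∀ ω, Y 0 ω = (0, 0))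
    (hYvert : ∀ n ω, (Y n ω).2 = X n ω)
    (hYstep : ∀ n ω, Y (n + 1) ω - Y n ω ∈ diagDirs)
    (σ : Ω → ℕ → ℕ) (hσmono : ∀ ω, StrictMono (σ ω)) (hσ0 : ∀ ω, σ ω 0 = 0)
    (L : ℕ → Ω → ℤ × ℤ) (hL : ∀ n ω, L n ω = Y (σ ω n) ω)
    (hLsimple : ∀ ω, Function.Injective (fun n => L n ω))
    (hLstep : ∀ n ω, L (n + 1) ω - L n ω ∈ diagDirs)
    (W : Ω → ℤ) (hW : ∀ ω, W ω = windPath (fun n => L n ω) (0, 0)) :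
    (∀ ω, ∀ m : ℕ, (m : ℤ) ≤ W ω → ∃ l : ℕ, (m : ℝ) ^ 2 / 4 ≤ (l : ℝ) ∧ 0 ≤ X l ω) ∧
    ∃ m₀ : ℕ, ∀ m : ℕ, m₀ ≤ m →
      ℙ {ω | (m : ℤ) ≤ W ω}
          ≤ ∑' l : ℕ, (if (m : ℝ) ^ 2 / 4 ≤ (l : ℝ) then
              ENNReal.ofReal (Real.exp (-(l : ℝ) * μ ^ 2 / 8)) else 0) ∧
      ℙ {ω | (m : ℤ) ≤ W ω}
          ≤ ENNReal.ofReal (2 * Real.exp (-(μ ^ 2 / 32) * (m : ℝ) ^ 2)) :=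
  stmt13_general ℙ μ hμ ξ hmeas hindep hsteps hmean X hX Y hYvert σ hσmono L hL hLsimple hLstep W hW
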